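/- Let G = (V, E) be a connected multigraph, f a divisor on G, and M a positive integer with M > dist_rec_G(f) + max{0, max_{v ∈ V}(f(v) − d_G(v))}; let G' and f' be as in the apex construction. Then dist_rec_G(f) ≥ dist_nonhalt_{G'}(f'). -/

import Mathlib

variable {V : Type*} [Fintype V] [DecidableEq V]

/-- The degree of vertex `v` in the multigraph with edge-multiplicity function `m`. -/
def mgDeg (m : V → V → ℕ) (v : V) : ℕ := ∑ u, m v u

/-- The divisor obtained from `f` by firing vertex `v`. -/
def mgFire (m : V → V → ℕ) (f : V → ℤ) (v : V) : V → ℤ :=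
  fun u => if u = v then f v - mgDeg m v else f u + m v u

/-- The divisor obtained from `f` by firing the vertices of `L` in order. -/
def mgPlay (m : V → V → ℕ) (f : V → ℤ) (L : List V) : V → ℤ :=
  L.foldl (mgFire m) f

/-- `L` is a legal game from `f`: each fired vertex is active when fired. -/
def mgLegal (m : V → V → ℕ) : (V → ℤ) → List V → Prop
  | _, [] => True
  | f, v :: L => ((mgDeg m v : ℤ) ≤ f v) ∧ mgLegal m (mgFire m f v) L

/-- A divisor is stable if no vertex is active. -/
def mgStable (m : V → V → ℕ) (f : V → ℤ) : Prop := ∀ v, f v < (mgDeg m v : ℤ)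

/-- A divisor is halting if some legal game from it ends at a stable divisor. -/
def mgHalting (m : V → V → ℕ) (f : V → ℤ) : Prop :=
  ∃ L : List V, mgLegal m f L ∧ mgStable m (mgPlay m f L)

/-- A divisor is recurrent if some non-empty legal game from it leads back to it. -/
def mgRecurrent (m : V → V → ℕ) (f : V → ℤ) : Prop :=
  ∃ L : List V, L ≠ [] ∧ mgLegal m f L ∧ mgPlay m f L = f

/-- A divisor is effective if it is nonnegative everywhere. -/
def mgEffective (f : V → ℤ) : Prop := ∀ v, 0 ≤ f v

/-- The degree of a divisor. -/
def mgDegDiv (f : V → ℤ) : ℤ := ∑ v, f v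

/-- Distance of a divisor from a recurrent state. -/
noncomputable def mgDistRec (m : V → V → ℕ) (f : V → ℤ) : ℕ :=
  sInf {n : ℕ | ∃ g : V → ℤ, mgEffective g ∧ mgDegDiv g = (n : ℤ) ∧ mgRecurrent m (f + g)}

/-- Distance of a divisor from a non-halting state. -/
noncomputable def mgDistNonhalt (m : V → V → ℕ) (f : V → ℤ) : ℕ :=
  sInf {n : ℕ | ∃ g : V → ℤ, mgEffective g ∧ mgDegDiv g = (n : ℤ) ∧ ¬ mgHalting m (f + g)}

/-- A multigraph is connected if any two vertices are joined by a path of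
positive-multiplicity edges. -/
def mgConnected (m : V → V → ℕ) : Prop :=
  ∀ u v : V, Relation.ReflTransGen (fun a b => 0 < m a b) u v

/-- `f` and `g` are linearly equivalent: `f` can be transformed to `g` by firings. -/
def mgLinEquiv (m : V → V → ℕ) (f g : V → ℤ) : Prop :=
  ∃ L : List V, mgPlay m f L = g

/-- A divisor is winnable if it is linearly equivalent to an effective divisor. -/
def mgWinnable (m : V → V → ℕ) (f : V → ℤ) : Prop :=
  ∃ g : V → ℤ, mgEffective g ∧ mgLinEquiv m f g

/-- The rank of a divisor. -/
noncomputable def mgRank (m : V → V → ℕ) (f : V → ℤ) : ℤ :=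
  ((sInf {n : ℕ | ∃ g : V → ℤ, mgEffective g ∧ mgDegDiv g = (n : ℤ) ∧
    ¬ mgWinnable m (f - g)} : ℕ) : ℤ) - 1

/-- Edge multiplicities of the apex construction: the edges of `G` (on the `some`
vertices) together with `M` parallel edges between the new vertex `none` and each
original vertex. -/
def apexM (m : V → V → ℕ) (M : ℕ) : Option V → Option V → ℕ
  | some u, some v => m u v
  | some _, none => M
  | none, some _ => M
  | none, none => 0

/-- The divisor `f\'` of the apex construction: `f\'(v) = f(v) + M` on original
vertices and `f\'(v_new) = 0`. -/
def apexF (f : V → ℤ) (M : ℕ) : Option V → ℤ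
  | some v => f v + M
  | none => 0

/-!
Take `g` effective of degree `dist_rec_G(f)` with `f + g` recurrent. On a connected graph a legal
cycle fires every vertex, and ordering the vertices by their last firing in it gives a legal game
firing each vertex exactly once. In `G'` the same order stays legal, since each vertex of `G`
carries `M` extra chips for its `M` edges to the apex; afterwards the apex has collected
`|V| * M` chips, its degree, and fires. This returns to `f' + g`, which is therefore recurrent, and
by the least action principle recurrent divisors are non-halting.
-/

section Game

variable {m : V → V → ℕ} {f : V → ℤ}

theorem mgFire_self (v : V) : mgFire m f v v = f v - mgDeg m v := by
  simp [mgFire]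

theorem mgFire_of_ne {u v : V} (h : u ≠ v) : mgFire m f v u = f u + m v u := by
  simp [mgFire, h]

theorem mgFire_comm (a b : V) : mgFire m (mgFire m f a) b = mgFire m (mgFire m f b) a := by
  by_cases hab : a = b
  · rw [hab]
  funext u
  by_cases hua : u = a
  · subst hua
    simp only [mgFire, hab, ↓reduceIte]
    ring
  by_cases hub : u = b
  · subst hub
    simp only [mgFire, Ne.symm hab, ↓reduceIte]
    ring
  simp only [mgFire, hua, hub, ↓reduceIte]
  ring

theorem mgPlay_cons (v : V) (L : List V) : mgPlay m f (v :: L) = mgPlay m (mgFire m f v) L :=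
  rfl

theorem mgPlay_append (A B : List V) : mgPlay m f (A ++ B) = mgPlay m (mgPlay m f A) B :=
  List.foldl_append

theorem mgPlay_perm {L L' : List V} (h : L.Perm L') : mgPlay m f L = mgPlay m f L' :=
  h.foldl_eq' (fun a _ b _ _ => mgFire_comm a b) f

theorem mgLegal_append {A B : List V} :
    mgLegal m f (A ++ B) ↔ mgLegal m f A ∧ mgLegal m (mgPlay m f A) B := by
  induction A generalizing f with
  | nil => simp [mgLegal, mgPlay]
  | cons a A ih => simp only [List.cons_append, mgLegal, ih, mgPlay_cons, and_assoc]

theorem mgPlay_apply (hl : ∀ v, m v v = 0) (L : List V) (f : V → ℤ) (v : V) :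
    mgPlay m f L v = f v + (((L.map fun u => m u v).sum : ℕ) : ℤ) - mgDeg m v * L.count v := by
  induction L generalizing f with
  | nil => simp [mgPlay]
  | cons a L ih =>
    rw [mgPlay_cons, ih]
    by_cases hva : v = a
    · subst hva
      rw [mgFire_self, List.map_cons, List.sum_cons, hl, List.count_cons_self]
      push_cast
      ring
    · rw [mgFire_of_ne hva, List.map_cons, List.sum_cons, List.count_cons_of_ne (Ne.symm hva)]
      push_cast
      ring

end Game

section LeastAction

variable {m : V → V → ℕ} {f : V → ℤ}

theorem mgLegal_fire_append {v : V} {A B : List V} (hvA : v ∉ A)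
    (hv : (mgDeg m v : ℤ) ≤ f v) (h : mgLegal m f (A ++ v :: B)) :
    mgLegal m (mgFire m f v) (A ++ B) := by
  induction A generalizing f with
  | nil => exact h.2
  | cons a A ih =>
    obtain ⟨ha, hA⟩ := h
    rw [List.mem_cons, not_or] at hvA
    refine ⟨?_, ?_⟩
    · rw [mgFire_of_ne (Ne.symm hvA.1)]
      omega
    · rw [mgFire_comm]
      exact ih hvA.2 (by rw [mgFire_of_ne hvA.1]; omega) hA

/-- The least action principle. -/
theorem coe_le_of_mgLegal_of_mgStable (hl : ∀ v, m v v = 0) {L' L : List V}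
    (hL' : mgLegal m f L') (hL : mgLegal m f L) (hstab : mgStable m (mgPlay m f L)) :
    (L' : Multiset V) ≤ L := by
  induction L' generalizing f L with
  | nil => exact Multiset.zero_le _
  | cons v T ih =>
    obtain ⟨hv, hT⟩ := hL'
    have hvL : v ∈ L := by
      by_contra hvL
      have := hstab v
      rw [mgPlay_apply hl, List.count_eq_zero.2 hvL] at this
      omega
    obtain ⟨A, B, rfl, hvA⟩ := List.eq_append_cons_of_mem hvL
    have hperm : (A ++ v :: B).Perm (v :: (A ++ B)) := List.perm_middle
    rw [Multiset.coe_eq_coe.2 hperm, ← Multiset.cons_coe, ← Multiset.cons_coe]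
    refine Multiset.cons_le_cons v (ih hT (mgLegal_fire_append hvA hv hL) ?_)
    rwa [← mgPlay_cons, ← mgPlay_perm hperm]

theorem exists_mgLegal_length_ge_of_mgRecurrent (h : mgRecurrent m f) (k : ℕ) :
    ∃ L, mgLegal m f L ∧ k ≤ L.length := by
  obtain ⟨C, hne, hC, hCf⟩ := h
  induction k with
  | zero => exact ⟨[], trivial, le_rfl⟩
  | succ k ih =>
    obtain ⟨L, hL, hk⟩ := ih
    refine ⟨C ++ L, mgLegal_append.2 ⟨hC, by rwa [hCf]⟩, ?_⟩
    have := List.length_pos_iff.2 hne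
    simp only [List.length_append]
    omega

theorem not_mgHalting_of_mgRecurrent (hl : ∀ v, m v v = 0) (h : mgRecurrent m f) :
    ¬ mgHalting m f := by
  rintro ⟨L, hL, hstab⟩
  obtain ⟨L', hL', hlen⟩ := exists_mgLegal_length_ge_of_mgRecurrent h (L.length + 1)
  have := Multiset.card_le_card (coe_le_of_mgLegal_of_mgStable hl hL' hL hstab)
  simp only [Multiset.coe_card] at this
  omega

end LeastAction

section Recurrence

variable {m : V → V → ℕ} {f : V → ℤ}

theorem sum_map_eq_sum_univ {W : List V} (hW : W.Nodup) (hmem : ∀ v, v ∈ W) (φ : V → ℕ) :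
    (W.map φ).sum = ∑ v, φ v := by
  rw [← List.sum_toFinset φ hW,
    Finset.eq_univ_iff_forall.2 fun v => List.mem_toFinset.2 (hmem v)]

theorem mgDeg_eq_sum_map (hs : ∀ u v, m u v = m v u) {W : List V} (hW : W.Nodup)
    (hmem : ∀ v, v ∈ W) (v : V) : mgDeg m v = (W.map fun u => m u v).sum := by
  rw [sum_map_eq_sum_univ hW hmem, mgDeg]
  exact Finset.sum_congr rfl fun u _ => hs v u

theorem mgPlay_eq_self_of_nodup (hs : ∀ u v, m u v = m v u) (hl : ∀ v, m v v = 0)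
    {W : List V} (hW : W.Nodup) (hmem : ∀ v, v ∈ W) : mgPlay m f W = f := by
  funext v
  rw [mgPlay_apply hl, ← mgDeg_eq_sum_map hs hW hmem, List.count_eq_one_of_mem hW (hmem v)]
  ring

theorem mgLegal_of_nodup {W : List V} (hW : W.Nodup)
    (h : ∀ P v Q, W = P ++ v :: Q →
      (mgDeg m v : ℤ) ≤ f v + (((P.map fun u => m u v).sum : ℕ) : ℤ)) :
    mgLegal m f W := by
  induction W generalizing f with
  | nil => trivial
  | cons a W ih =>
    rw [List.nodup_cons] at hW
    refine ⟨by simpa using h [] a W rfl, ih hW.2 fun P v Q hPQ => ?_⟩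
    have hva : v ≠ a := by
      rintro rfl
      exact hW.1 (hPQ ▸ List.mem_append_right _ List.mem_cons_self)
    have := h (a :: P) v Q (by rw [hPQ, List.cons_append])
    rw [mgFire_of_ne hva]
    simp only [List.map_cons, List.sum_cons, Nat.cast_add] at this
    linarith

theorem mgRecurrent_of_mgLegal_nodup [Nonempty V] (hs : ∀ u v, m u v = m v u)
    (hl : ∀ v, m v v = 0) {W : List V} (hW : W.Nodup) (hmem : ∀ v, v ∈ W)
    (hleg : mgLegal m f W) : mgRecurrent m f :=
  ⟨W, List.ne_nil_of_mem (hmem (Classical.arbitrary V)), hleg,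
    mgPlay_eq_self_of_nodup hs hl hW hmem⟩

theorem exists_mgDegDiv_eq_mgDistRec [Nonempty V] (hs : ∀ u v, m u v = m v u)
    (hl : ∀ v, m v v = 0) (f : V → ℤ) :
    ∃ g, mgEffective g ∧ mgDegDiv g = mgDistRec m f ∧ mgRecurrent m (f + g) := by
  set g : V → ℤ := fun v => max (mgDeg m v - f v) 0
  have hg : mgEffective g := fun v => le_max_right _ _
  have hW := Finset.nodup_toList (Finset.univ : Finset V)
  have hrec : mgRecurrent m (f + g) := by
    refine mgRecurrent_of_mgLegal_nodup hs hl hW (fun v => Finset.mem_toList.2 (Finset.mem_univ v))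
      (mgLegal_of_nodup hW fun P v _ _ => ?_)
    have := le_max_left ((mgDeg m v : ℤ) - f v) 0
    have : (0 : ℤ) ≤ (((P.map fun u => m u v).sum : ℕ) : ℤ) := Nat.cast_nonneg _
    simp only [Pi.add_apply, g]
    linarith
  have hdeg : mgDegDiv g = ((mgDegDiv g).toNat : ℤ) :=
    (Int.toNat_of_nonneg (Finset.sum_nonneg fun v _ => hg v)).symm
  exact Nat.sInf_mem (s := {n : ℕ | ∃ g : V → ℤ, mgEffective g ∧ mgDegDiv g = (n : ℤ) ∧
    mgRecurrent m (f + g)}) ⟨_, g, hg, hdeg, hrec⟩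

/-- A vertex missed by a cycle receives no chips from it, so its neighbours are missed too. -/
theorem mem_of_mgPlay_eq_self (hl : ∀ v, m v v = 0) (hconn : mgConnected m) {L : List V}
    (hne : L ≠ []) (hL : mgPlay m f L = f) (v : V) : v ∈ L := by
  obtain ⟨w, hw⟩ := L.exists_mem_of_ne_nil hne
  induction hconn w v with
  | refl => exact hw
  | @tail b c _ hbc hb =>
    by_contra hc
    have hsum := congrFun hL c
    rw [mgPlay_apply hl, List.count_eq_zero.2 hc] at hsum
    have : m b c ≤ (L.map fun u => m u c).sum := List.le_sum_of_mem (List.mem_map_of_mem hb)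
    omega

/-- `List.dedup` keeps last occurrences, so `Q` lists the vertices whose last firing in `L` comes
after that of `v`; each of them sends chips to `v` after `v` has fired for the last time. -/
theorem sum_map_le_mgPlay_of_dedup_eq (hl : ∀ v, m v v = 0) {L : List V} (hL : mgLegal m f L)
    {P Q : List V} {v : V} (hPQ : L.dedup = P ++ v :: Q) :
    (((Q.map fun u => m u v).sum : ℕ) : ℤ) ≤ mgPlay m f L v := by
  induction L generalizing f P with
  | nil => simp at hPQ
  | cons a L ih =>
    obtain ⟨ha, hL⟩ := hL
    rw [mgPlay_cons]
    by_cases haL : a ∈ L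
    · rw [List.dedup_cons_of_mem haL] at hPQ
      exact ih hL hPQ
    rw [List.dedup_cons_of_notMem haL] at hPQ
    rcases P with _ | ⟨b, P⟩
    · obtain ⟨rfl, rfl⟩ : a = v ∧ L.dedup = Q := by simpa using hPQ
      rw [mgPlay_apply hl, mgFire_self, List.count_eq_zero.2 haL]
      have := ((L.dedup_sublist).map fun u => m u a).sum_le_sum fun _ _ => Nat.zero_le _
      simp only [Nat.cast_zero, mul_zero, sub_zero]
      omega
    · simp only [List.cons_append, List.cons.injEq] at hPQ
      exact ih hL hPQ.2

theorem exists_mgLegal_nodup_of_mgRecurrent (hs : ∀ u v, m u v = m v u)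
    (hl : ∀ v, m v v = 0) (hconn : mgConnected m) (h : mgRecurrent m f) :
    ∃ W : List V, W.Nodup ∧ (∀ v, v ∈ W) ∧ mgLegal m f W := by
  obtain ⟨L, hne, hL, hLf⟩ := h
  have hmem : ∀ v, v ∈ L.dedup :=
    fun v => List.mem_dedup.2 (mem_of_mgPlay_eq_self hl hconn hne hLf v)
  refine ⟨L.dedup, L.nodup_dedup, hmem, mgLegal_of_nodup L.nodup_dedup fun P v Q hPQ => ?_⟩
  have hQ := sum_map_le_mgPlay_of_dedup_eq hl hL hPQ
  rw [hLf] at hQ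
  rw [mgDeg_eq_sum_map hs L.nodup_dedup hmem v, hPQ]
  simp only [List.map_append, List.map_cons, List.sum_append, List.sum_cons, hl, zero_add,
    Nat.cast_add]
  linarith

end Recurrence

section Apex

variable {m : V → V → ℕ} {M : ℕ}

omit [Fintype V] [DecidableEq V] in
theorem apexM_symm (hs : ∀ u v, m u v = m v u) : ∀ a b, apexM m M a b = apexM m M b a
  | some u, some v => hs u v
  | some _, none | none, some _ | none, none => rfl

omit [Fintype V] [DecidableEq V] in
theorem apexM_self (hl : ∀ v, m v v = 0) : ∀ a, apexM m M a a = 0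
  | some v => hl v
  | none => rfl

omit [DecidableEq V] in
theorem mgDeg_apexM_some (v : V) : mgDeg (apexM m M) (some v) = mgDeg m v + M := by
  simp [mgDeg, Fintype.sum_option, apexM, add_comm]

omit [DecidableEq V] in
theorem mgDeg_apexM_none : mgDeg (apexM m M) none = Fintype.card V * M := by
  simp [mgDeg, Fintype.sum_option, apexM]

omit [Fintype V] [DecidableEq V] in
theorem apexF_add_elim (f g : V → ℤ) :
    apexF f M + (fun a => a.elim 0 g) = apexF (f + g) M := by
  funext a
  cases a <;> simp [apexF, add_right_comm]

theorem mgLegal_apexM_map_some {f : V → ℤ} {F : Option V → ℤ} {W : List V} (hW : W.Nodup)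
    (hF : ∀ v ∈ W, F (some v) = f v + M) (h : mgLegal m f W) :
    mgLegal (apexM m M) F (W.map some) := by
  induction W generalizing f F with
  | nil => trivial
  | cons a W ih =>
    rw [List.nodup_cons] at hW
    obtain ⟨ha, hW'⟩ := h
    refine ⟨?_, ih hW.2 (fun v hv => ?_) hW'⟩
    · rw [hF a List.mem_cons_self, mgDeg_apexM_some, Nat.cast_add]
      linarith
    · have hva : v ≠ a := by
        rintro rfl
        exact hW.1 hv
      rw [mgFire_of_ne ((Option.some_injective V).ne hva), mgFire_of_ne hva,
        hF v (List.mem_cons_of_mem _ hv)]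
      simp only [apexM]
      ring

theorem mgPlay_apexM_map_some_none (F : Option V → ℤ) (W : List V) :
    mgPlay (apexM m M) F (W.map some) none = F none + W.length * M := by
  induction W generalizing F with
  | nil => simp [mgPlay]
  | cons a W ih =>
    rw [List.map_cons, mgPlay_cons, ih, mgFire_of_ne (Option.some_ne_none a).symm]
    simp only [apexM, List.length_cons]
    push_cast
    ring

theorem mgRecurrent_apexF (hs : ∀ u v, m u v = m v u) (hl : ∀ v, m v v = 0)
    (hconn : mgConnected m) {f : V → ℤ} (hf : mgRecurrent m f) :
    mgRecurrent (apexM m M) (apexF f M) := by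
  obtain ⟨W, hW, hmem, hleg⟩ := exists_mgLegal_nodup_of_mgRecurrent hs hl hconn hf
  have hlen : W.length = Fintype.card V := by
    rw [← List.toFinset_card_of_nodup hW,
      Finset.eq_univ_iff_forall.2 fun v => List.mem_toFinset.2 (hmem v), Finset.card_univ]
  have hC : (W.map some ++ [none]).Nodup := by
    simpa [List.nodup_append] using hW.map (Option.some_injective V)
  have hCmem : ∀ a : Option V, a ∈ W.map some ++ [none] := by
    rintro (_ | v) <;> simp [hmem]
  refine mgRecurrent_of_mgLegal_nodup (apexM_symm hs) (apexM_self hl) hC hCmem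
    (mgLegal_append.2 ⟨mgLegal_apexM_map_some hW (fun v _ => rfl) hleg, ?_, trivial⟩)
  rw [mgPlay_apexM_map_some_none, mgDeg_apexM_none, hlen]
  simp [apexF]

end Apex

theorem stmt13_general [Nonempty V] (m : V → V → ℕ) (hsymm : ∀ u v, m u v = m v u)
    (hloop : ∀ v, m v v = 0) (hconn : mgConnected m) (f : V → ℤ) (M : ℕ) :
    mgDistNonhalt (apexM m M) (apexF f M) ≤ mgDistRec m f := by
  obtain ⟨g, hg, hdeg, hrec⟩ := exists_mgDegDiv_eq_mgDistRec hsymm hloop f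
  refine Nat.sInf_le ⟨fun a => a.elim 0 g, ?_, ?_, ?_⟩
  · rintro (_ | v)
    exacts [le_rfl, hg v]
  · simpa [mgDegDiv, Fintype.sum_option] using hdeg
  · rw [apexF_add_elim]
    exact not_mgHalting_of_mgRecurrent (apexM_self hloop)
      (mgRecurrent_apexF hsymm hloop hconn hrec)

/-- `dist_rec_G(f) ≥ dist_nonhalt_{G'}(f')` for the apex construction. -/
theorem stmt13 [Nonempty V] (m : V → V → ℕ) (hsymm : ∀ u v, m u v = m v u)
    (hloop : ∀ v, m v v = 0) (hconn : mgConnected m) (f : V → ℤ) (M : ℕ)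
    (hMpos : 0 < M)
    (hM : (mgDistRec m f : ℤ) +
        max 0 (Finset.univ.sup' Finset.univ_nonempty (fun v => f v - (mgDeg m v : ℤ)))
      < (M : ℤ)) :
    mgDistNonhalt (apexM m M) (apexF f M) ≤ mgDistRec m f :=
  stmt13_general m hsymm hloop hconn f M
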